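/- arXiv:1903.08688 — 6 statements merged into one kernel-verified Lean document; each statement's English description precedes it below -/
import Mathlib

section
/- Let f be μ-strongly convex and L-smooth with minimizer x*. Let x_{k+1} = x_k - h_k ∇f(x_k) with the Polyak step size h_k = 2(f(x_k) - f*)/||∇f(x_k)||^2. Then q_{k+1} ≤ (1 - μ/L) q_k, where q_k = (1/2)||x_k - x*||^2; consequently q_k ≤ (1 - μ/L)^k q_0. -/
/-!
With `a = x_k - x*`, `G = ∇f(x_k)` and `Δ = f(x_k) - f*`, the Polyak step satisfies
`h_k ‖G‖² = 2Δ`, so expanding `‖a - h_k G‖²` the quadratic term `h_k² ‖G‖²` cancels against the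
`Δ`-part of the strong convexity bound `⟪G, a⟫ ≥ Δ + μ/2 ‖a‖²`, leaving `‖a - h_k G‖² ≤ (1 - h_k μ) ‖a‖²`.
Smoothness at the minimizer gives `‖G‖² ≤ 2LΔ`, i.e. `h_k ≥ 1/L`.
-/

open scoped RealInnerProductSpace

section PolyakStep

variable {E : Type*} [NormedAddCommGroup E]

theorem inv_le_polyak_step {G : E} {Δ L : ℝ} (hL : 0 < L) (hG : G ≠ 0)
    (hΔ : 1 / (2 * L) * ‖G‖ ^ 2 ≤ Δ) : 1 / L ≤ 2 * Δ / ‖G‖ ^ 2 := by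
  have hG2 : 0 < ‖G‖ ^ 2 := by positivity
  rw [div_le_div_iff₀ hL hG2]
  rw [div_mul_eq_mul_div, div_le_iff₀ (by positivity)] at hΔ
  linarith

theorem norm_sub_smul_sq_le_of_polyak [InnerProductSpace ℝ E] {a G : E} {Δ μ t : ℝ} (ht : 0 ≤ t)
    (hstep : t * ‖G‖ ^ 2 = 2 * Δ) (hinner : Δ + μ / 2 * ‖a‖ ^ 2 ≤ ⟪G, a⟫) :
    ‖a - t • G‖ ^ 2 ≤ (1 - t * μ) * ‖a‖ ^ 2 := by
  have hexpand : ‖a - t • G‖ ^ 2 = ‖a‖ ^ 2 - 2 * t * ⟪G, a⟫ + t * (t * ‖G‖ ^ 2) := by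
    rw [norm_sub_sq_real, inner_smul_right, real_inner_comm, norm_smul, Real.norm_eq_abs,
      mul_pow, sq_abs]
    ring
  rw [hexpand, hstep]
  nlinarith [mul_le_mul_of_nonneg_left hinner ht]

end PolyakStep

theorem stmt_5_general {d : ℕ} (μ L : ℝ) (hμ : 0 < μ) (hμL : μ ≤ L)
    (f : EuclideanSpace ℝ (Fin d) → ℝ) (g : EuclideanSpace ℝ (Fin d) → EuclideanSpace ℝ (Fin d))
    (hconv : ∀ x y, f x - (f y + ⟪g y, x - y⟫) ≥ μ/2 * ‖x - y‖^2)
    (hsmooth : ∀ x y, f x - (f y + ⟪g y, x - y⟫) ≥ (1/(2*L)) * ‖g x - g y‖^2)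
    (xstar : EuclideanSpace ℝ (Fin d))
    (hgstar : g xstar = 0)
    (x : ℕ → EuclideanSpace ℝ (Fin d)) (h : ℕ → ℝ)
    (hgx : ∀ k, g (x k) ≠ 0)
    (hstep : ∀ k, h k = 2 * (f (x k) - f xstar) / ‖g (x k)‖^2)
    (hiter : ∀ k, x (k+1) = x k - h k • g (x k))
    (q : ℕ → ℝ) (hq : ∀ k, q k = (1/2) * ‖x k - xstar‖^2) :
    (∀ k, q (k+1) ≤ (1 - μ/L) * q k) ∧ (∀ k, q k ≤ (1 - μ/L)^k * q 0) := by
  have hL : 0 < L := hμ.trans_le hμL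
  have contraction : ∀ k, q (k+1) ≤ (1 - μ/L) * q k := by
    intro k
    have hgap : 1 / (2 * L) * ‖g (x k)‖ ^ 2 ≤ f (x k) - f xstar := by
      simpa [hgstar] using hsmooth (x k) xstar
    have hinner : f (x k) - f xstar + μ / 2 * ‖x k - xstar‖ ^ 2 ≤ ⟪g (x k), x k - xstar⟫ := by
      have := hconv xstar (x k)
      rw [← neg_sub (x k) xstar, inner_neg_right, norm_neg] at this
      linarith
    have hhL : 1 / L ≤ h k := hstep k ▸ inv_le_polyak_step hL (hgx k) hgap
    have hh0 : 0 ≤ h k := (one_div_pos.2 hL).le.trans hhL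
    have hdecrease := norm_sub_smul_sq_le_of_polyak (t := h k) hh0
      (by rw [hstep k, div_mul_cancel₀ _ (by simpa using hgx k)]) hinner
    have hμh : μ / L ≤ h k * μ := by
      rw [div_eq_mul_one_div, mul_comm]; gcongr
    rw [hq, hq, hiter, sub_right_comm]
    linarith [mul_le_mul_of_nonneg_right hμh (sq_nonneg ‖x k - xstar‖)]
  have hrate : 0 ≤ 1 - μ / L := sub_nonneg.2 ((div_le_one hL).2 hμL)
  exact ⟨contraction, fun k => le_geom hrate k fun i _ => contraction i⟩

theorem stmt_5 {d : ℕ} (μ L : ℝ) (hμ : 0 < μ) (hμL : μ ≤ L)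
    (f : EuclideanSpace ℝ (Fin d) → ℝ) (g : EuclideanSpace ℝ (Fin d) → EuclideanSpace ℝ (Fin d))
    (hconv : ∀ x y, f x - (f y + ⟪g y, x - y⟫) ≥ μ/2 * ‖x - y‖^2)
    (hsmooth : ∀ x y, f x - (f y + ⟪g y, x - y⟫) ≥ (1/(2*L)) * ‖g x - g y‖^2)
    (xstar : EuclideanSpace ℝ (Fin d)) (hmin : ∀ x, f xstar ≤ f x)
    (hgstar : g xstar = 0)
    (x : ℕ → EuclideanSpace ℝ (Fin d)) (h : ℕ → ℝ)
    (hgx : ∀ k, g (x k) ≠ 0)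
    (hstep : ∀ k, h k = 2 * (f (x k) - f xstar) / ‖g (x k)‖^2)
    (hiter : ∀ k, x (k+1) = x k - h k • g (x k))
    (q : ℕ → ℝ) (hq : ∀ k, q k = (1/2) * ‖x k - xstar‖^2) :
    (∀ k, q (k+1) ≤ (1 - μ/L) * q k) ∧ (∀ k, q k ≤ (1 - μ/L)^k * q 0) :=
  stmt_5_general μ L hμ hμL f g hconv hsmooth xstar hgstar x h hgx hstep hiter q hq
end

section
/- Let f be μ-strongly convex and L-smooth, with stochastic gradient noise of variance σ^2, and Polyak step size h_k = 2(f(x_k) - f*)/(||∇f(x_k)||^2 + σ^2). Then h_k ≥ 2/(2L + σ^2/(μ q_k)), where q_k = (1/2)||x_k - x*||^2. -/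
open scoped RealInnerProductSpace

theorem stmt_8 {d : ℕ} (μ L σ : ℝ) (hμ : 0 < μ) (hμL : μ ≤ L) (hσ : 0 ≤ σ^2)
    (f : EuclideanSpace ℝ (Fin d) → ℝ) (g : EuclideanSpace ℝ (Fin d) → EuclideanSpace ℝ (Fin d))
    (hconv : ∀ x y, f x - (f y + ⟪g y, x - y⟫) ≥ μ/2 * ‖x - y‖^2)
    (hsmooth : ∀ x y, f x - (f y + ⟪g y, x - y⟫) ≥ (1/(2*L)) * ‖g x - g y‖^2)
    (xstar : EuclideanSpace ℝ (Fin d)) (hmin : ∀ x, f xstar ≤ f x)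
    (hgstar : g xstar = 0)
    (xk : EuclideanSpace ℝ (Fin d))
    (qk : ℝ) (hqk : qk = (1/2) * ‖xk - xstar‖^2) (hqkpos : 0 < qk)
    (hk : ℝ) (hdef : hk = 2 * (f xk - f xstar) / (‖g xk‖^2 + σ^2)) :
    hk ≥ 2 / (2 * L + σ^2 / (μ * qk)) := by
  have hL : 0 < L := lt_of_lt_of_le hμ hμL
  -- f xk - f xstar ≥ μ * qk
  have h1 := hconv xk xstar
  rw [hgstar] at h1
  simp only [inner_zero_left] at h1
  have hFq : f xk - f xstar ≥ μ * qk := by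
    have hq2 : ‖xk - xstar‖^2 = 2 * qk := by rw [hqk]; ring
    rw [hq2] at h1
    linarith [h1]
  have hFpos : 0 < f xk - f xstar := lt_of_lt_of_le (by positivity) hFq
  -- ‖g xk‖² ≤ 2 L (f xk - f xstar)
  have h2 := hsmooth xk xstar
  rw [hgstar] at h2
  simp only [inner_zero_left, sub_zero] at h2
  have hgle : ‖g xk‖^2 ≤ 2 * L * (f xk - f xstar) := by
    have h2' : f xk - f xstar ≥ 1/(2*L) * ‖g xk‖^2 := by linarith [h2]
    have h2'' := mul_le_mul_of_nonneg_left h2' (le_of_lt (by positivity : (0:ℝ) < 2*L))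
    calc ‖g xk‖^2 = 2*L * (1/(2*L) * ‖g xk‖^2) := by field_simp
      _ ≤ 2*L*(f xk - f xstar) := h2''
  have hμq : 0 < μ * qk := by positivity
  have hD : 0 < 2 * L + σ^2 / (μ * qk) := by positivity
  have h3 := hconv xstar xk
  have hip : ⟪g xk, xk - xstar⟫ ≥ (f xk - f xstar) + μ/2 * ‖xstar - xk‖^2 := by
    have hiq : ⟪g xk, xstar - xk⟫ = -⟪g xk, xk - xstar⟫ := by
      rw [← inner_neg_right]; congr 1; abel
    rw [hiq] at h3; linarith
  have hgpos : 0 < ‖g xk‖^2 := by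
    by_contra h
    push_neg at h
    have hn : ‖g xk‖ = 0 := by nlinarith [sq_nonneg ‖g xk‖]
    have hz : g xk = 0 := norm_eq_zero.mp hn
    rw [hz] at hip
    simp at hip
    nlinarith [sq_nonneg ‖xstar - xk‖]
  have hG : 0 < ‖g xk‖^2 + σ^2 := by linarith
  rw [hdef, ge_iff_le, div_le_div_iff₀ hD hG]
  have hσle : σ^2 ≤ (f xk - f xstar) * (σ^2 / (μ * qk)) := by
    rw [mul_div_assoc', le_div_iff₀ hμq]
    have := mul_le_mul_of_nonneg_left hFq hσ
    linarith [this]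
  calc 2 * (‖g xk‖^2 + σ^2)
      ≤ 2 * (2*L*(f xk - f xstar) + (f xk - f xstar) * (σ^2 / (μ*qk))) := by linarith
    _ = 2 * (f xk - f xstar) * (2*L + σ^2/(μ*qk)) := by ring
end

section
/- Let 0 < μ ≤ L, σ^2 ≥ 0, r = 1 - μ/L, β = σ^2/(2μL). For any q > 0 and any h satisfying h ≥ 2/(2L + σ^2/(μ q)), we have (1 - μ h) q ≤ q (β + r q)/(β + q). -/
/-! With `r = 1 - μ/L` one has `(β + r q)/(β + q) = 1 - (μ/L) q/(β + q)`, so the claim says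
`μ h ≥ μ q / (L (β + q))`; and for `β = σ²/(2μL)` the threshold `q / (L (β + q))` is exactly
`2 / (2L + σ²/(μ q))`. -/

lemma two_div_two_mul_add_eq {μ L σ q : ℝ} (hμ : μ ≠ 0) (hL : L ≠ 0) (hq : q ≠ 0) :
    2 / (2 * L + σ ^ 2 / (μ * q)) = q / (L * (σ ^ 2 / (2 * μ * L) + q)) := by
  have hden : 2 * L + σ ^ 2 / (μ * q) = 2 / q * (L * (σ ^ 2 / (2 * μ * L) + q)) := by
    field_simp
    ring
  rw [hden, ← div_div, div_div_eq_mul_div, mul_div_cancel_left₀ q two_ne_zero]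

lemma one_sub_mul_le_of_div_le {μ L β q h : ℝ} (hμ : 0 ≤ μ) (hL : L ≠ 0) (hβq : 0 < β + q)
    (hh : q / (L * (β + q)) ≤ h) :
    1 - μ * h ≤ (β + (1 - μ / L) * q) / (β + q) := by
  have hrate : (β + (1 - μ / L) * q) / (β + q) = 1 - μ * (q / (L * (β + q))) := by
    field_simp
    ring
  rw [hrate]
  linarith [mul_le_mul_of_nonneg_left hh hμ]

theorem stmt_9_general (μ L σ r β : ℝ) (hμ : 0 < μ) (hμL : μ ≤ L)
    (hr : r = 1 - μ/L) (hβ : β = σ^2 / (2 * μ * L))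
    (q : ℝ) (hq : 0 < q)
    (h : ℝ) (hh : h ≥ 2 / (2 * L + σ^2 / (μ * q))) :
    (1 - μ * h) * q ≤ q * (β + r * q) / (β + q) := by
  have hL : 0 < L := hμ.trans_le hμL
  have hβq : 0 < β + q := by
    have : 0 ≤ β := hβ ▸ by positivity
    linarith
  rw [two_div_two_mul_add_eq hμ.ne' hL.ne' hq.ne', ← hβ] at hh
  rw [hr, mul_div_assoc, mul_comm q]
  exact mul_le_mul_of_nonneg_right (one_sub_mul_le_of_div_le hμ.le hL.ne' hβq hh) hq.le

theorem stmt_9 (μ L σ r β : ℝ) (hμ : 0 < μ) (hμL : μ ≤ L) (hσ : 0 < σ)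
    (hr : r = 1 - μ/L) (hβ : β = σ^2 / (2 * μ * L))
    (q : ℝ) (hq : 0 < q)
    (h : ℝ) (hh : h ≥ 2 / (2 * L + σ^2 / (μ * q))) :
    (1 - μ * h) * q ≤ q * (β + r * q) / (β + q) :=
  stmt_9_general μ L σ r β hμ hμL hr hβ q hq h hh
end

section
/- Let β > 0, r ∈ [0,1), and define T(x) = x(β + r x)/(β + x) for x > 0. Given b > 0, set c = (1 - r)/(β + r/b). Then for all k ≥ 0, T(1/(ck + b)) ≤ 1/(c(k+1) + b). -/
/-! Writing `x = 1 / (c k + b)`, the target is `x / (1 + c x)`, and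
`x (β + r x) / (β + x) ≤ x / (1 + c x)` is equivalent to `c (β + r x) ≤ 1 - r`.
Since `x ≤ 1 / b`, the left side is at most `c (β + r / b) = 1 - r`. -/

lemma mul_add_div_add_le_div_one_add_mul {β r c x : ℝ} (hβ : 0 ≤ β) (hx : 0 < x) (hc : 0 ≤ c)
    (h : c * (β + r * x) ≤ 1 - r) :
    x * (β + r * x) / (β + x) ≤ x / (1 + c * x) := by
  rw [div_le_div_iff₀ (by positivity) (by positivity)]
  nlinarith [mul_le_mul_of_nonneg_left h (mul_pos hx hx).le]

theorem stmt_10 (β r b c : ℝ) (hβ : 0 < β) (hr0 : 0 ≤ r) (hr1 : r < 1)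
    (hb : 0 < b) (hc : c = (1 - r) / (β + r / b))
    (T : ℝ → ℝ) (hT : ∀ x, T x = x * (β + r * x) / (β + x)) :
    ∀ k : ℕ, T (1 / (c * k + b)) ≤ 1 / (c * (k + 1) + b) := by
  intro k
  have hc0 : 0 ≤ c := hc ▸ div_nonneg (by linarith) (by positivity)
  set y := c * k + b with hy_def
  have hby : b ≤ y := le_add_of_nonneg_left (by positivity)
  have hy : 0 < y := hb.trans_le hby
  have hcond : c * (β + r * (1 / y)) ≤ 1 - r := calc
    c * (β + r * (1 / y)) ≤ c * (β + r * (1 / b)) := by gcongr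
    _ = 1 - r := by rw [hc]; field_simp
  have htarget : 1 / (c * (k + 1) + b) = 1 / y / (1 + c * (1 / y)) := by
    rw [hy_def]; field_simp; ring
  rw [hT, htarget]
  exact mul_add_div_add_le_div_one_add_mul hβ.le (by positivity) hc0 hcond
end

section
/- Let β > 0 and r ∈ [0,1), with S(y) = y(βy + 1)/(βy + r) for y > 0, and define a_k = ck + b where b > 0 and c = (1-r)/(β + r/b). Then S(a_k) ≥ a_{k+1} for all k ≥ 0. -/
theorem stmt_14 (β r b c : ℝ) (hβ : 0 < β) (hr0 : 0 ≤ r) (hr1 : r < 1)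
    (hb : 0 < b) (hc : c = (1 - r) / (β + r / b))
    (S : ℝ → ℝ) (hS : ∀ y, S y = y * (β * y + 1) / (β * y + r))
    (a : ℕ → ℝ) (ha : ∀ k, a k = c * k + b) :
    ∀ k : ℕ, S (a k) ≥ a (k + 1) := by
  intro k
  have hk : (0:ℝ) ≤ k := Nat.cast_nonneg k
  have hbr : 0 < β * b + r := by positivity
  have hden : β + r / b > 0 := by positivity
  have hc' : c * (β * b + r) = (1 - r) * b := by
    rw [hc]; field_simp
  have hcnn : 0 ≤ c := by
    rw [hc]; apply div_nonneg (by linarith) (le_of_lt hden)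
  have hy : c * k + b ≥ b := by nlinarith
  have hyd : 0 < β * (c * k + b) + r := by nlinarith
  rw [hS, ha, ha]
  push_cast
  rw [ge_iff_le, le_div_iff₀ hyd]
  nlinarith [mul_nonneg (mul_nonneg hr0 (sub_nonneg.2 hy)) (le_of_lt (sub_pos.2 hr1)),
    mul_nonneg hcnn hk, mul_nonneg (mul_nonneg hcnn hk) hk]
end

section
/- Let f be μ-strongly convex and L-smooth with minimizer x*, stochastic gradients ∇f(x_k) + e with E[e]=0, E[||e||^2]=σ^2, and Polyak step size h_k = 2(f(x_k)-f*)/(||∇f(x_k)||^2 + σ^2). Then E[q_{k+1} | x_k] ≤ (1 - μ h_k) q_k ≤ q_k (β + r q_k)/(β + q_k), where r = 1 - μ/L and β = σ^2/(2μL), q_k = (1/2)||x_k - x*||^2. -/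
/-!
Expanding the square and averaging out the mean-zero noise gives
`E q_{k+1} = q_k - h⟪∇f(x_k), x_k - x*⟫ + h²(‖∇f(x_k)‖² + σ²)/2`. The Polyak step makes the last
term equal to `h (f(x_k) - f*)`, and strong convexity bounds the inner product from below by
`f(x_k) - f* + μ q_k`, whence `E q_{k+1} ≤ (1 - μ h) q_k`. For the second inequality, smoothness
(`‖∇f(x_k)‖² ≤ 2L (f(x_k) - f*)`) and strong convexity (`f(x_k) - f* ≥ μ q_k`) bound the Polyak step
from below by `h (β + q_k) ≥ q_k / L`.
-/

open scoped RealInnerProductSpace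
open MeasureTheory

section Gradient

variable {E : Type*} [NormedAddCommGroup E] [InnerProductSpace ℝ E]
  {f : E → ℝ} {g : E → E} {μ L : ℝ} {xstar : E}

lemma le_inner_sub_of_strongConvex
    (hconv : ∀ x y, f x - (f y + ⟪g y, x - y⟫) ≥ μ / 2 * ‖x - y‖ ^ 2) (x y : E) :
    f x - f y + μ / 2 * ‖x - y‖ ^ 2 ≤ ⟪g x, x - y⟫ := by
  have h := hconv y x
  rw [← neg_sub x y, inner_neg_right, norm_neg] at h
  linarith

lemma mul_norm_sq_le_sub_of_strongConvex
    (hconv : ∀ x y, f x - (f y + ⟪g y, x - y⟫) ≥ μ / 2 * ‖x - y‖ ^ 2)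
    (hgstar : g xstar = 0) (x : E) :
    μ / 2 * ‖x - xstar‖ ^ 2 ≤ f x - f xstar := by
  have h := hconv x xstar
  rw [hgstar, inner_zero_left, add_zero] at h
  exact h

lemma norm_sq_le_of_smooth (hL : 0 < L)
    (hsmooth : ∀ x y, f x - (f y + ⟪g y, x - y⟫) ≥ (1 / (2 * L)) * ‖g x - g y‖ ^ 2)
    (hgstar : g xstar = 0) (x : E) :
    ‖g x‖ ^ 2 ≤ 2 * L * (f x - f xstar) := by
  have h := hsmooth x xstar
  rw [hgstar, inner_zero_left, add_zero, sub_zero] at h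
  rw [ge_iff_le, one_div, inv_mul_le_iff₀ (by positivity)] at h
  exact h

end Gradient

section Noise

variable {E : Type*} [NormedAddCommGroup E] [InnerProductSpace ℝ E] [CompleteSpace E]
  {Ω : Type*} [MeasurableSpace Ω] {P : Measure Ω} [IsProbabilityMeasure P] {e : Ω → E}

lemma integral_norm_sub_smul_sq (he : Integrable e P) (he2 : Integrable (fun ω => ‖e ω‖ ^ 2) P)
    (hmean : ∫ ω, e ω ∂P = 0) (c : E) (t : ℝ) :
    ∫ ω, ‖c - t • e ω‖ ^ 2 ∂P = ‖c‖ ^ 2 + t ^ 2 * ∫ ω, ‖e ω‖ ^ 2 ∂P := by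
  have hexpand : ∀ ω, ‖c - t • e ω‖ ^ 2 = ‖c‖ ^ 2 - 2 * t * ⟪c, e ω⟫ + t ^ 2 * ‖e ω‖ ^ 2 := by
    intro ω
    rw [norm_sub_sq_real, inner_smul_right, norm_smul, Real.norm_eq_abs, mul_pow, sq_abs]
    ring
  have hinner : Integrable (fun ω => 2 * t * ⟪c, e ω⟫) P := (he.const_inner c).const_mul _
  have hdrift : Integrable (fun ω => ‖c‖ ^ 2 - 2 * t * ⟪c, e ω⟫) P :=
    (integrable_const _).sub hinner
  simp_rw [hexpand]
  rw [integral_add hdrift (he2.const_mul _),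
    integral_sub (integrable_const _) hinner, integral_const_mul, integral_inner he, hmean,
    inner_zero_right, integral_const_mul]
  simp

lemma integral_half_norm_sgd_step_sub_sq (he : Integrable e P)
    (he2 : Integrable (fun ω => ‖e ω‖ ^ 2) P) (hmean : ∫ ω, e ω ∂P = 0) (x xstar v : E) (h : ℝ) :
    ∫ ω, 1 / 2 * ‖x - h • (v + e ω) - xstar‖ ^ 2 ∂P
      = 1 / 2 * ‖x - xstar‖ ^ 2 - h * ⟪v, x - xstar⟫
        + h ^ 2 / 2 * (‖v‖ ^ 2 + ∫ ω, ‖e ω‖ ^ 2 ∂P) := by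
  have hsplit : ∀ ω, x - h • (v + e ω) - xstar = (x - xstar - h • v) - h • e ω := by
    intro ω
    rw [smul_add]
    abel
  simp_rw [hsplit]
  rw [integral_const_mul, integral_norm_sub_smul_sq he he2 hmean, norm_sub_sq_real,
    inner_smul_right, norm_smul, Real.norm_eq_abs, mul_pow, sq_abs, real_inner_comm]
  ring

end Noise

lemma div_le_polyak_step_mul {μ L F G S q : ℝ} (hμ : 0 < μ) (hL : 0 < L) (hS : 0 < S) (hG : 0 ≤ G)
    (hq : 0 ≤ q) (hFq : μ * q ≤ F) (hGF : G ≤ 2 * L * F) :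
    q / L ≤ 2 * F / (G + S) * (S / (2 * μ * L) + q) := by
  rw [div_le_iff₀ hL, div_mul_eq_mul_div, div_mul_eq_mul_div, le_div_iff₀ (by positivity)]
  have hFS : S * (μ * q) ≤ S * F := mul_le_mul_of_nonneg_left hFq hS.le
  have hGq : μ * q * G ≤ μ * q * (2 * L * F) := mul_le_mul_of_nonneg_left hGF (by positivity)
  field_simp
  nlinarith

lemma one_sub_mul_mul_le_of_le_mul {μ L h q β : ℝ} (hμ : 0 < μ) (hq : 0 ≤ q) (hβ : 0 < β)
    (hstep : q / L ≤ h * (β + q)) :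
    (1 - μ * h) * q ≤ q * (β + (1 - μ / L) * q) / (β + q) := by
  rw [le_div_iff₀ (by positivity)]
  have key := mul_le_mul_of_nonneg_left hstep (mul_nonneg hμ.le hq)
  linear_combination key

theorem stmt_18_general {d : ℕ} {Ω : Type*} [MeasureSpace Ω]
    [IsProbabilityMeasure (volume : Measure Ω)]
    (μ L σ : ℝ) (hμ : 0 < μ) (hμL : μ ≤ L) (hσ : 0 < σ)
    (f : EuclideanSpace ℝ (Fin d) → ℝ) (g : EuclideanSpace ℝ (Fin d) → EuclideanSpace ℝ (Fin d))
    (hconv : ∀ x y, f x - (f y + ⟪g y, x - y⟫) ≥ μ/2 * ‖x - y‖^2)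
    (hsmooth : ∀ x y, f x - (f y + ⟪g y, x - y⟫) ≥ (1/(2*L)) * ‖g x - g y‖^2)
    (xstar : EuclideanSpace ℝ (Fin d))
    (hgstar : g xstar = 0)
    (e : Ω → EuclideanSpace ℝ (Fin d))
    (he_int : Integrable e) (he2_int : Integrable (fun ω => ‖e ω‖^2))
    (hmean : ∫ ω, e ω = 0) (hvar : ∫ ω, ‖e ω‖^2 = σ^2)
    (xk : EuclideanSpace ℝ (Fin d))
    (qk : ℝ) (hqk : qk = (1/2) * ‖xk - xstar‖^2)
    (hk : ℝ) (hdef : hk = 2 * (f xk - f xstar) / (‖g xk‖^2 + σ^2))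
    (xk1 : Ω → EuclideanSpace ℝ (Fin d))
    (hiter : ∀ ω, xk1 ω = xk - hk • (g xk + e ω))
    (r β : ℝ) (hr : r = 1 - μ/L) (hβ : β = σ^2 / (2 * μ * L)) :
    (∫ ω, (1/2) * ‖xk1 ω - xstar‖^2) ≤ (1 - μ * hk) * qk
      ∧ (1 - μ * hk) * qk ≤ qk * (β + r * qk) / (β + qk) := by
  have hL : 0 < L := hμ.trans_le hμL
  have hinner := le_inner_sub_of_strongConvex hconv xk xstar
  have hgap := mul_norm_sq_le_sub_of_strongConvex hconv hgstar xk
  have hgrad := norm_sq_le_of_smooth hL hsmooth hgstar xk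
  have hq : 0 ≤ qk := by rw [hqk]; positivity
  have hF : 0 ≤ f xk - f xstar := le_trans (by positivity) hgap
  have hhk : 0 ≤ hk := by rw [hdef]; exact div_nonneg (by linarith) (by positivity)
  have hpolyak : hk * (‖g xk‖ ^ 2 + σ ^ 2) = 2 * (f xk - f xstar) := by
    rw [hdef]; field_simp
  constructor
  · simp_rw [hiter]
    rw [integral_half_norm_sgd_step_sub_sq he_int he2_int hmean, hvar, ← hqk]
    linear_combination mul_le_mul_of_nonneg_left hinner hhk + (hk / 2) * hpolyak + (μ * hk) * hqk
  · rw [hr]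
    refine one_sub_mul_mul_le_of_le_mul hμ hq (by rw [hβ]; positivity) ?_
    rw [hβ, hdef]
    exact div_le_polyak_step_mul hμ hL (by positivity) (by positivity) hq
      (by rw [hqk]; linarith) hgrad

theorem stmt_18 {d : ℕ} {Ω : Type*} [MeasureSpace Ω]
    [IsProbabilityMeasure (volume : Measure Ω)]
    (μ L σ : ℝ) (hμ : 0 < μ) (hμL : μ ≤ L) (hσ : 0 < σ)
    (f : EuclideanSpace ℝ (Fin d) → ℝ) (g : EuclideanSpace ℝ (Fin d) → EuclideanSpace ℝ (Fin d))
    (hconv : ∀ x y, f x - (f y + ⟪g y, x - y⟫) ≥ μ/2 * ‖x - y‖^2)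
    (hsmooth : ∀ x y, f x - (f y + ⟪g y, x - y⟫) ≥ (1/(2*L)) * ‖g x - g y‖^2)
    (xstar : EuclideanSpace ℝ (Fin d)) (hmin : ∀ x, f xstar ≤ f x)
    (hgstar : g xstar = 0)
    (e : Ω → EuclideanSpace ℝ (Fin d))
    (he_int : Integrable e) (he2_int : Integrable (fun ω => ‖e ω‖^2))
    (hmean : ∫ ω, e ω = 0) (hvar : ∫ ω, ‖e ω‖^2 = σ^2)
    (xk : EuclideanSpace ℝ (Fin d))
    (qk : ℝ) (hqk : qk = (1/2) * ‖xk - xstar‖^2) (hqkpos : 0 < qk)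
    (hk : ℝ) (hdef : hk = 2 * (f xk - f xstar) / (‖g xk‖^2 + σ^2))
    (xk1 : Ω → EuclideanSpace ℝ (Fin d))
    (hiter : ∀ ω, xk1 ω = xk - hk • (g xk + e ω))
    (r β : ℝ) (hr : r = 1 - μ/L) (hβ : β = σ^2 / (2 * μ * L)) :
    (∫ ω, (1/2) * ‖xk1 ω - xstar‖^2) ≤ (1 - μ * hk) * qk
      ∧ (1 - μ * hk) * qk ≤ qk * (β + r * qk) / (β + qk) :=
  stmt_18_general μ L σ hμ hμL hσ f g hconv hsmooth xstar hgstar e he_int he2_int hmean hvar xk qk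
    hqk hk hdef xk1 hiter r β hr hβ
end
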